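/- arXiv:1611.04050 — 2 statements merged into one kernel-verified Lean document; each statement's English description precedes it below -/
import Mathlib

section
/- Let x be an element of the tensor space S·Y with coefficient matrix X ∈ ℝ^{q×s}, let M_Y = L_Y L_Yᵀ and M_S = L_S L_Sᵀ with L_Y, L_S invertible, let V ∈ ℝ^{q×q̂} satisfy VᵀV = I_{q̂}, and let Ŷ := span{ν̂_1,…,ν̂_{q̂}} where ν̂_k := Σ_{i=1}^{q} (L_Y^{-ᵀ} V)_{ik} ν_i. Then the L²((0,T)×Ω)-orthogonal projection Π_{S·Ŷ} x of x onto the tensor space S·Ŷ has coefficient matrix X̂ = L_Y^{-ᵀ} V Vᵀ L_Yᵀ X (with respect to the bases ν and ψ), and the projection error satisfies ‖x − Π_{S·Ŷ} x‖_{L²((0,T)×Ω)} = ‖(I_q − V Vᵀ) L_Yᵀ X L_S‖_F. -/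
/-!
By Fubini, the `L²((0,T)×Ω)` pairing of the tensor functions with coefficient matrices `A` and `B`
is `tr (Aᵀ M_Y B M_S)`; with `M_Y = L_Y L_Yᵀ` and `M_S = L_S L_Sᵀ` this is the Frobenius pairing
of `L_Yᵀ A L_S` and `L_Yᵀ B L_S`. In these coordinates `S·Ŷ` becomes `{V N}`, and since `V` has
orthonormal columns, the residual `(1 - V Vᵀ) L_Yᵀ X L_S` of `X̂` is Frobenius-orthogonal to it.
-/

open MeasureTheory Matrix
open scoped Kronecker

section Matrix

variable {m n : Type*} [Fintype m] [Fintype n]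

theorem Matrix.sum_sq_eq_trace_transpose_mul_self (E : Matrix m n ℝ) :
    ∑ i, ∑ j, E i j ^ 2 = (Eᵀ * E).trace := by
  rw [← vec_dotProduct_vec, dotProduct, Fintype.sum_prod_type, Finset.sum_comm]
  simp [sq]

theorem Matrix.trace_transpose_mul_eq_zero_of_transpose_mul_self_eq_one {k : Type*} [Fintype k]
    [DecidableEq m] [DecidableEq n] {V : Matrix m n ℝ} (hV : Vᵀ * V = 1)
    (M : Matrix m k ℝ) (N : Matrix n k ℝ) : (((1 - V * Vᵀ) * M)ᵀ * (V * N)).trace = 0 := by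
  have hVP : Vᵀ * (1 - V * Vᵀ) = 0 := by
    rw [Matrix.mul_sub, Matrix.mul_one, ← Matrix.mul_assoc, hV, Matrix.one_mul, sub_self]
  have hswap : ((1 - V * Vᵀ) * M)ᵀ * (V * N) = (Vᵀ * (1 - V * Vᵀ) * M)ᵀ * N := by
    simp only [transpose_mul, transpose_transpose, Matrix.mul_assoc]
  rw [hswap, hVP, Matrix.zero_mul, transpose_zero, Matrix.zero_mul, trace_zero]

end Matrix

section Integral

variable {α : Type*} [MeasurableSpace α] {μ : Measure α}

theorem integral_sum_mul_sum {ι : Type*} [Fintype ι] (φ : ι → α → ℝ)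
    (hφ : ∀ x y, Integrable (fun p => φ x p * φ y p) μ) (a b : ι → ℝ) :
    ∫ p, (∑ x, a x * φ x p) * (∑ y, b y * φ y p) ∂μ
      = a ⬝ᵥ (of fun x y => ∫ p, φ x p * φ y p ∂μ) *ᵥ b := by
  have hterm : ∀ x y, Integrable (fun p => a x * φ x p * (b y * φ y p)) μ := fun x y =>
    ((hφ x y).const_mul (a x * b y)).congr (.of_forall fun p => by ring)
  simp_rw [Finset.sum_mul_sum]
  rw [integral_finsetSum _ fun x _ => integrable_finsetSum _ fun y _ => hterm x y]
  simp only [dotProduct, mulVec, Finset.mul_sum, of_apply]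
  refine Finset.sum_congr rfl fun x _ => ?_
  rw [integral_finsetSum _ fun y _ => hterm x y]
  refine Finset.sum_congr rfl fun y _ => ?_
  rw [← integral_mul_const, ← integral_const_mul]
  congr 1 with p
  ring

theorem MeasureTheory.L2.integral_mul_eq_inner (f g : Lp ℝ 2 μ) :
    ∫ a, f a * g a ∂μ = inner ℝ f g := by
  simp [L2.inner_def, mul_comm]

theorem MeasureTheory.L2.integrable_mul (f g : Lp ℝ 2 μ) : Integrable (fun a => f a * g a) μ := by
  simpa [mul_comm] using L2.integrable_inner (𝕜 := ℝ) f g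

end Integral

section Tensor

variable {Ω T ι κ ι' : Type*} [Fintype ι] [Fintype κ] [Fintype ι']

def tensorFun (ν : ι → Ω → ℝ) (ψ : κ → T → ℝ) (A : Matrix ι κ ℝ) (p : Ω × T) : ℝ :=
  ∑ j, ∑ i, A i j * ν i p.1 * ψ j p.2

theorem tensorFun_sub (ν : ι → Ω → ℝ) (ψ : κ → T → ℝ) (A B : Matrix ι κ ℝ) (p : Ω × T) :
    tensorFun ν ψ A p - tensorFun ν ψ B p = tensorFun ν ψ (A - B) p := by
  simp only [tensorFun, ← Finset.sum_sub_distrib, Matrix.sub_apply, sub_mul]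

theorem tensorFun_of_eq_sum {ν : ι → Ω → ℝ} {νhat : ι' → Ω → ℝ} {W : Matrix ι ι' ℝ}
    (hνhat : ∀ k ξ, νhat k ξ = ∑ i, W i k * ν i ξ) (ψ : κ → T → ℝ) (D : Matrix ι' κ ℝ) :
    tensorFun νhat ψ D = tensorFun ν ψ (W * D) := by
  ext p
  simp only [tensorFun, hνhat, mul_apply, Finset.mul_sum, Finset.sum_mul]
  refine Finset.sum_congr rfl fun j _ => Finset.sum_comm.trans ?_
  exact Finset.sum_congr rfl fun i _ => Finset.sum_congr rfl fun k _ => by ring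

theorem tensorFun_eq_sum_vec (ν : ι → Ω → ℝ) (ψ : κ → T → ℝ) (A : Matrix ι κ ℝ) (p : Ω × T) :
    tensorFun ν ψ A p = ∑ x : κ × ι, vec A x * (ν x.2 p.1 * ψ x.1 p.2) := by
  simp only [tensorFun, Fintype.sum_prod_type, vec, mul_assoc]

variable [MeasurableSpace Ω] [MeasurableSpace T] {μ : Measure Ω} {τ : Measure T}
  [SigmaFinite μ] [SigmaFinite τ]

theorem integral_tensorFun_mul (ν : ι → Lp ℝ 2 μ) (ψ : κ → Lp ℝ 2 τ) (A B : Matrix ι κ ℝ) :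
    ∫ p, tensorFun (fun i => ν i) (fun j => ψ j) A p * tensorFun (fun i => ν i) (fun j => ψ j) B p
        ∂μ.prod τ
      = (Aᵀ * (gram ℝ ν * B * (gram ℝ ψ)ᵀ)).trace := by
  have hsplit : ∀ x y : κ × ι, (fun p : Ω × T => ν x.2 p.1 * ψ x.1 p.2 * (ν y.2 p.1 * ψ y.1 p.2))
      = fun p => (ν x.2 p.1 * ν y.2 p.1) * (ψ x.1 p.2 * ψ y.1 p.2) :=
    fun _ _ => funext fun _ => by ring
  have hkron :
      (of fun x y : κ × ι => ∫ p, ν x.2 p.1 * ψ x.1 p.2 * (ν y.2 p.1 * ψ y.1 p.2) ∂μ.prod τ)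
        = gram ℝ ψ ⊗ₖ gram ℝ ν := by
    ext ⟨j, i⟩ ⟨l, k⟩
    rw [of_apply, hsplit, integral_prod_mul (fun a => ν i a * ν k a) (fun b => ψ j b * ψ l b),
      L2.integral_mul_eq_inner, L2.integral_mul_eq_inner, kronecker_apply, gram_apply, gram_apply,
      mul_comm]
  simp_rw [tensorFun_eq_sum_vec]
  rw [integral_sum_mul_sum, hkron, kronecker_mulVec_vec, vec_dotProduct_vec]
  intro x y
  rw [hsplit]
  exact (L2.integrable_mul _ _).mul_prod (L2.integrable_mul _ _)

theorem integral_tensorFun_mul_of_gram_eq {ν : ι → Lp ℝ 2 μ} {ψ : κ → Lp ℝ 2 τ}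
    {LY : Matrix ι ι ℝ} {LS : Matrix κ κ ℝ}
    (hν : gram ℝ ν = LY * LYᵀ) (hψ : gram ℝ ψ = LS * LSᵀ) (A B : Matrix ι κ ℝ) :
    ∫ p, tensorFun (fun i => ν i) (fun j => ψ j) A p * tensorFun (fun i => ν i) (fun j => ψ j) B p
        ∂μ.prod τ
      = ((LYᵀ * A * LS)ᵀ * (LYᵀ * B * LS)).trace := by
  rw [integral_tensorFun_mul, hν, hψ]
  simp only [transpose_mul, transpose_transpose, Matrix.mul_assoc]
  rw [trace_mul_comm LSᵀ]
  simp only [Matrix.mul_assoc]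

end Tensor

theorem stmt_6_general
    {q s qhat : ℕ} {Ω T : Type*} [MeasurableSpace Ω] [MeasurableSpace T]
    (μ : Measure Ω) (τ : Measure T) [SigmaFinite μ] [SigmaFinite τ]
    (ν : Fin q → Lp ℝ 2 μ) (ψ : Fin s → Lp ℝ 2 τ)
    (LS : Matrix (Fin s) (Fin s) ℝ)
    (hMS : ∀ i j, (inner ℝ (ψ i) (ψ j) : ℝ) = (LS * LSᵀ) i j)
    (LY : Matrix (Fin q) (Fin q) ℝ) (hLY : IsUnit LY.det)
    (hMY : ∀ i j, (inner ℝ (ν i) (ν j) : ℝ) = (LY * LYᵀ) i j)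
    (V : Matrix (Fin q) (Fin qhat) ℝ) (hV : Vᵀ * V = 1)
    (νhat : Fin qhat → Ω → ℝ)
    (hνhat : ∀ k ξ, νhat k ξ = ∑ i, ((LYᵀ)⁻¹ * V) i k * ν i ξ)
    (X : Matrix (Fin q) (Fin s) ℝ)
    (Xhat : Matrix (Fin q) (Fin s) ℝ)
    (hXhat : Xhat = (LYᵀ)⁻¹ * V * Vᵀ * LYᵀ * X) :
    -- the function with coefficient matrix X̂ lies in S·Ŷ:
    (∃ C : Matrix (Fin qhat) (Fin s) ℝ, ∀ p : Ω × T,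
        (∑ j, ∑ i, Xhat i j * ν i p.1 * ψ j p.2)
          = ∑ j, ∑ k, C k j * νhat k p.1 * ψ j p.2) ∧
    -- x minus it is L²-orthogonal to every element of S·Ŷ:
    (∀ D : Matrix (Fin qhat) (Fin s) ℝ,
        ∫ p : Ω × T,
          ((∑ j, ∑ i, X i j * ν i p.1 * ψ j p.2)
            - ∑ j, ∑ i, Xhat i j * ν i p.1 * ψ j p.2)
          * (∑ j, ∑ k, D k j * νhat k p.1 * ψ j p.2) ∂(μ.prod τ) = 0) ∧
    -- squared projection error:
    (∫ p : Ω × T,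
        ((∑ j, ∑ i, X i j * ν i p.1 * ψ j p.2)
          - ∑ j, ∑ i, Xhat i j * ν i p.1 * ψ j p.2) ^ 2 ∂(μ.prod τ)
      = ∑ i, ∑ j, ((((1 - V * Vᵀ) * LYᵀ * X * LS : Matrix (Fin q) (Fin s) ℝ)) i j) ^ 2) := by
  set x := tensorFun (fun i => ν i) (fun j => ψ j)
  have hLYT : LYᵀ * (LYᵀ)⁻¹ = 1 := mul_nonsing_inv _ (by rwa [det_transpose])
  have hsub : ∀ A B p, x A p - x B p = x (A - B) p := tensorFun_sub _ _
  have hYhat : ∀ D, tensorFun νhat (fun j => ψ j) D = x ((LYᵀ)⁻¹ * V * D) :=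
    tensorFun_of_eq_sum hνhat _
  have hinner : ∀ A B, ∫ p, x A p * x B p ∂μ.prod τ = ((LYᵀ * A * LS)ᵀ * (LYᵀ * B * LS)).trace :=
    integral_tensorFun_mul_of_gram_eq (Matrix.ext hMY) (Matrix.ext hMS)
  have herror : LYᵀ * (X - Xhat) * LS = (1 - V * Vᵀ) * LYᵀ * X * LS := by
    simp only [hXhat, Matrix.mul_sub, Matrix.sub_mul, Matrix.mul_assoc, Matrix.one_mul]
    rw [← Matrix.mul_assoc LYᵀ (LYᵀ)⁻¹, hLYT, Matrix.one_mul]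
  refine ⟨⟨Vᵀ * LYᵀ * X, fun p => ?_⟩, fun D => ?_, ?_⟩
  · change x Xhat p = tensorFun νhat _ _ p
    rw [hYhat, hXhat]
    simp only [Matrix.mul_assoc]
  · change ∫ p, (x X p - x Xhat p) * tensorFun νhat _ D p ∂μ.prod τ = 0
    simp_rw [hYhat, hsub]
    rw [hinner, herror, ← Matrix.mul_assoc LYᵀ, ← Matrix.mul_assoc LYᵀ, hLYT, Matrix.one_mul]
    simpa only [Matrix.mul_assoc] using
      trace_transpose_mul_eq_zero_of_transpose_mul_self_eq_one hV (LYᵀ * X * LS) (D * LS)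
  · change ∫ p, (x X p - x Xhat p) ^ 2 ∂μ.prod τ = _
    rw [sum_sq_eq_trace_transpose_mul_self, ← herror, ← hinner]
    simp_rw [hsub, sq]

/-- For `x ∈ S·Y` with coefficient matrix `X`, `M_Y = L_Y L_Yᵀ`, `M_S = L_S L_Sᵀ`
(`L_Y, L_S` invertible), `VᵀV = I` and `ν̂_k := ∑_i (L_Y^{-ᵀ}V)_{ik} ν_i`:
the `L²((0,T)×Ω)`-orthogonal projection of `x` onto `S·Ŷ` has coefficient matrix
`X̂ = L_Y^{-ᵀ} V Vᵀ L_Yᵀ X` w.r.t. the bases `ν`, `ψ` — i.e. the function with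
coefficients `X̂` lies in `S·Ŷ` and `x` minus it is orthogonal to all of `S·Ŷ` —
and the squared projection error equals `‖(I - V Vᵀ) L_Yᵀ X L_S‖_F²`. -/
theorem stmt_6
    {q s qhat : ℕ} {Ω T : Type*} [MeasurableSpace Ω] [MeasurableSpace T]
    (μ : Measure Ω) (τ : Measure T) [SigmaFinite μ] [SigmaFinite τ]
    (ν : Fin q → Lp ℝ 2 μ) (ψ : Fin s → Lp ℝ 2 τ)
    (hν : LinearIndependent ℝ ν) (hψ : LinearIndependent ℝ ψ)
    (LS : Matrix (Fin s) (Fin s) ℝ) (hLS : IsUnit LS.det)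
    (hMS : ∀ i j, (inner ℝ (ψ i) (ψ j) : ℝ) = (LS * LSᵀ) i j)
    (LY : Matrix (Fin q) (Fin q) ℝ) (hLY : IsUnit LY.det)
    (hMY : ∀ i j, (inner ℝ (ν i) (ν j) : ℝ) = (LY * LYᵀ) i j)
    (V : Matrix (Fin q) (Fin qhat) ℝ) (hV : Vᵀ * V = 1)
    (νhat : Fin qhat → Ω → ℝ)
    (hνhat : ∀ k ξ, νhat k ξ = ∑ i, ((LYᵀ)⁻¹ * V) i k * ν i ξ)
    (X : Matrix (Fin q) (Fin s) ℝ)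
    (Xhat : Matrix (Fin q) (Fin s) ℝ)
    (hXhat : Xhat = (LYᵀ)⁻¹ * V * Vᵀ * LYᵀ * X) :
    -- the function with coefficient matrix X̂ lies in S·Ŷ:
    (∃ C : Matrix (Fin qhat) (Fin s) ℝ, ∀ p : Ω × T,
        (∑ j, ∑ i, Xhat i j * ν i p.1 * ψ j p.2)
          = ∑ j, ∑ k, C k j * νhat k p.1 * ψ j p.2) ∧
    -- x minus it is L²-orthogonal to every element of S·Ŷ:
    (∀ D : Matrix (Fin qhat) (Fin s) ℝ,
        ∫ p : Ω × T,
          ((∑ j, ∑ i, X i j * ν i p.1 * ψ j p.2)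
            - ∑ j, ∑ i, Xhat i j * ν i p.1 * ψ j p.2)
          * (∑ j, ∑ k, D k j * νhat k p.1 * ψ j p.2) ∂(μ.prod τ) = 0) ∧
    -- squared projection error:
    (∫ p : Ω × T,
        ((∑ j, ∑ i, X i j * ν i p.1 * ψ j p.2)
          - ∑ j, ∑ i, Xhat i j * ν i p.1 * ψ j p.2) ^ 2 ∂(μ.prod τ)
      = ∑ i, ∑ j, ((((1 - V * Vᵀ) * LYᵀ * X * LS : Matrix (Fin q) (Fin s) ℝ)) i j) ^ 2) :=
  stmt_6_general μ τ ν ψ LS hMS LY hLY hMY V hV νhat hνhat X Xhat hXhat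
end

section
/- (Optimal low-rank bases in time.) Let x be an element of the tensor space S·Y with coefficient matrix X ∈ ℝ^{q×s}, let M_Y = L_Y L_Yᵀ and M_S = L_S L_Sᵀ with L_Y, L_S invertible, and let U_{ŝ} ∈ ℝ^{s×ŝ} be a matrix whose columns are ŝ leading right singular vectors of A := L_Yᵀ X L_S (i.e. orthonormal right singular vectors corresponding to the ŝ largest singular values of A). Define Ŝ := span{ψ̂_1,…,ψ̂_{ŝ}} where ψ̂_k := Σ_{j=1}^{s} (L_S^{-ᵀ} U_{ŝ})_{jk} ψ_j. Then Ŝ is a best-approximating ŝ-dimensional subspace of S = span{ψ_1,…,ψ_s}: for every subspace R ⊆ S with dim R = ŝ, it holds that ‖x − Π_{Ŝ·Y} x‖_{L²((0,T)×Ω)} ≤ ‖x − Π_{R·Y} x‖_{L²((0,T)×Ω)}. -/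
/-!
Write `x_E = ∑ E i j • ν i ⊗ ψ j`. By the Gram factorizations, `∫ x_E x_F` is the Frobenius
inner product of `L_Yᵀ E L_S` and `L_Yᵀ F L_S`, so after the change of variables
`A = L_Yᵀ X L_S`, `M = L_Sᵀ B`, projecting `x` onto `R·Y` becomes projecting the rows of `A` onto
the column space of `M`, with squared error `‖A‖² - tr (Aᵀ A P_M)`, `P_M` the orthogonal
projector. As `Aᵀ A = W diag(σ²) Wᵀ`, we get `tr (Aᵀ A P) = ∑ σ_j² (Wᵀ P W)_jj`, whose weights lie
in `[0, 1]` and sum to `ŝ = rank P`; such a sum is at most `∑_{j < ŝ} σ_j²`, and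
`P = U_ŝ U_ŝᵀ` attains it. For `B = L_S⁻ᵀ U_ŝ` one has `M = U_ŝ`.
-/

open MeasureTheory Matrix
open scoped BigOperators

open Finset
open scoped InnerProductSpace

theorem sum_fin_ite_lt_eq_sum_range {M : Type*} [AddCommMonoid M] {s k : ℕ} (hk : k ≤ s)
    (f : ℕ → M) : ∑ j : Fin s, (if (j : ℕ) < k then f j else 0) = ∑ i ∈ range k, f i := by
  rw [Fin.sum_univ_eq_sum_range (fun i => if i < k then f i else 0), ← sum_filter]
  congr 1
  ext i
  simp only [mem_filter, mem_range]
  omega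

theorem sum_mul_le_sum_range_of_antitone {s k : ℕ} {d : ℕ → ℝ} (hd : Antitone d)
    {t : Fin s → ℝ} (ht : ∀ j, t j ∈ Set.Icc (0 : ℝ) 1) (hsum : ∑ j, t j = k) :
    ∑ j : Fin s, d j * t j ≤ ∑ i ∈ range k, d i := by
  have hks : k ≤ s := by
    have : (k : ℝ) ≤ s := by
      simpa [← hsum] using sum_le_sum fun j (_ : j ∈ univ) => (ht j).2
    exact_mod_cast this
  -- compare termwise with the threshold `d k`
  have key : ∀ j : Fin s, d j * t j ≤
      (if (j : ℕ) < k then d j else 0) + d k * (t j - if (j : ℕ) < k then 1 else 0) := by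
    intro j
    obtain ⟨ht0, ht1⟩ := ht j
    split_ifs with hj
    · nlinarith [hd hj.le]
    · nlinarith [hd (not_lt.mp hj)]
  calc ∑ j : Fin s, d j * t j
      ≤ ∑ j : Fin s,
          ((if (j : ℕ) < k then d j else 0) + d k * (t j - if (j : ℕ) < k then 1 else 0)) :=
        sum_le_sum fun j _ => key j
    _ = ∑ i ∈ range k, d i := by
        rw [sum_add_distrib, ← mul_sum, sum_sub_distrib, hsum,
          sum_fin_ite_lt_eq_sum_range hks d, sum_fin_ite_lt_eq_sum_range hks (fun _ => (1 : ℝ))]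
        simp

namespace Matrix

variable {m n r : Type*} [Fintype m] [Fintype n] [Fintype r]

theorem trace_transpose_mul_mul_mul_transpose (E F : Matrix m n ℝ) (G : Matrix m m ℝ)
    (H : Matrix n n ℝ) :
    trace (Eᵀ * G * F * Hᵀ) = ∑ j, ∑ l, ∑ i, ∑ k, E i j * F k l * (G i k * H j l) := by
  simp only [trace, Matrix.diag, mul_apply, transpose_apply, sum_mul]
  refine sum_congr rfl fun j _ => sum_congr rfl fun l _ => ?_
  rw [sum_comm]
  exact sum_congr rfl fun i _ => sum_congr rfl fun k _ => by ring

theorem sum_sum_mul_sum_eq_mul_transpose (C : Matrix m r ℝ) (B : Matrix n r ℝ) (a : m → ℝ)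
    (b : n → ℝ) :
    ∑ k, ∑ i, C i k * a i * (∑ j, B j k * b j) = ∑ j, ∑ i, (C * Bᵀ) i j * a i * b j := by
  simp only [mul_apply, transpose_apply, mul_sum, sum_mul]
  rw [sum_comm, sum_congr rfl fun i _ => sum_comm, sum_comm]
  exact sum_congr rfl fun j _ => sum_congr rfl fun i _ => sum_congr rfl fun k _ => by ring

theorem sum_sum_sub_sum_sum_eq_sub (E F : Matrix m n ℝ) (a : m → ℝ) (b : n → ℝ) :
    (∑ j, ∑ i, E i j * a i * b j) - ∑ j, ∑ i, F i j * a i * b j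
      = ∑ j, ∑ i, (E - F) i j * a i * b j := by
  simp only [← sum_sub_distrib, Matrix.sub_apply, sub_mul]

variable [DecidableEq r]

-- The orthogonal projector onto the column space of `M`; it is `0` (junk inverse) when `Mᵀ M` is
-- singular.
noncomputable def colProj (M : Matrix n r ℝ) : Matrix n n ℝ := M * (Mᵀ * M)⁻¹ * Mᵀ

theorem isSymm_colProj (M : Matrix n r ℝ) : (colProj M).IsSymm := by
  simp only [IsSymm, colProj, transpose_mul, transpose_transpose, transpose_nonsing_inv,
    Matrix.mul_assoc]

theorem isIdempotentElem_colProj {M : Matrix n r ℝ} (hM : IsUnit (Mᵀ * M).det) :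
    IsIdempotentElem (colProj M) := by
  simp only [IsIdempotentElem, colProj, Matrix.mul_assoc]
  rw [← Matrix.mul_assoc Mᵀ M, ← Matrix.mul_assoc (Mᵀ * M), mul_nonsing_inv _ hM, Matrix.one_mul]

theorem trace_colProj {M : Matrix n r ℝ} (hM : IsUnit (Mᵀ * M).det) :
    trace (colProj M) = Fintype.card r := by
  rw [colProj, Matrix.mul_assoc, trace_mul_comm, Matrix.mul_assoc, nonsing_inv_mul _ hM,
    trace_one]

theorem colProj_of_transpose_mul_self_eq_one {M : Matrix n r ℝ} (hM : Mᵀ * M = 1) :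
    colProj M = M * Mᵀ := by
  rw [colProj, hM, inv_one, Matrix.mul_one]

theorem isUnit_det_transpose_mul_self_of_injective {M : Matrix n r ℝ}
    (hM : Function.Injective M.mulVec) : IsUnit (Mᵀ * M).det := by
  rw [← isUnit_iff_isUnit_det, ← mulVec_injective_iff_isUnit]
  have hker := ker_mulVecLin_transpose_mul_self M
  rw [LinearMap.ker_eq_bot (f := M.mulVecLin) |>.mpr hM] at hker
  exact LinearMap.ker_eq_bot.mp hker

theorem submatrix_id_transpose_mul_self {α k : Type*} [CommSemiring α] [DecidableEq n]
    [DecidableEq k] {W : Matrix n n α} (hW : Wᵀ * W = 1) {e : k → n}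
    (he : Function.Injective e) : (W.submatrix id e)ᵀ * W.submatrix id e = 1 := by
  change (Wᵀ * W).submatrix e e = 1
  rw [hW, submatrix_one _ he]

theorem trace_transpose_mul_self_eq_zero_iff {A : Matrix m n ℝ} : trace (Aᵀ * A) = 0 ↔ A = 0 := by
  simpa using trace_conjTranspose_mul_self_eq_zero_iff (A := A)

theorem mul_transpose_eq_mul_colProj {A : Matrix m n ℝ} {M : Matrix n r ℝ}
    (hM : IsUnit (Mᵀ * M).det) {C : Matrix m r ℝ}
    (hC : ∀ D : Matrix m r ℝ, trace ((A - C * Mᵀ)ᵀ * (D * Mᵀ)) = 0) :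
    C * Mᵀ = A * colProj M := by
  have hres : (A - C * Mᵀ) * M = 0 := by
    set R := A - C * Mᵀ
    refine trace_transpose_mul_self_eq_zero_iff.mp ?_
    rw [← hC (R * M), transpose_mul, Matrix.mul_assoc, trace_mul_comm, ← Matrix.mul_assoc,
      ← Matrix.mul_assoc, ← Matrix.mul_assoc]
  have hCM : C = A * M * (Mᵀ * M)⁻¹ := by
    rw [Matrix.sub_mul, sub_eq_zero] at hres
    rw [hres, Matrix.mul_assoc C, Matrix.mul_assoc, mul_nonsing_inv _ hM, Matrix.mul_one]
  rw [hCM, colProj]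
  simp only [Matrix.mul_assoc]

theorem trace_transpose_mul_self_sub_mul_of_isIdempotentElem [DecidableEq n] (A : Matrix m n ℝ)
    {P : Matrix n n ℝ} (hP : P.IsSymm) (hPP : IsIdempotentElem P) :
    trace ((A - A * P)ᵀ * (A - A * P)) = trace (Aᵀ * A) - trace (Aᵀ * A * P) := by
  have hQ : (1 - P) * (1 - P) = 1 - P := by
    rw [Matrix.sub_mul, Matrix.mul_sub, Matrix.mul_sub, hPP.eq]; simp
  calc trace ((A - A * P)ᵀ * (A - A * P))
      = trace ((1 - P) * (Aᵀ * A) * (1 - P)) := by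
        rw [show A - A * P = A * (1 - P) by rw [Matrix.mul_sub, Matrix.mul_one], transpose_mul,
          transpose_sub, transpose_one, hP.eq]
        simp only [Matrix.mul_assoc]
    _ = trace (Aᵀ * A * ((1 - P) * (1 - P))) := by
        rw [trace_mul_comm, ← Matrix.mul_assoc, trace_mul_comm]
    _ = trace (Aᵀ * A) - trace (Aᵀ * A * P) := by
        rw [hQ, Matrix.mul_sub, Matrix.mul_one, trace_sub]

theorem trace_residual_of_orthogonal [DecidableEq n] {A : Matrix m n ℝ} {M : Matrix n r ℝ}
    (hM : IsUnit (Mᵀ * M).det) {C : Matrix m r ℝ}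
    (hC : ∀ D : Matrix m r ℝ, trace ((A - C * Mᵀ)ᵀ * (D * Mᵀ)) = 0) :
    trace ((A - C * Mᵀ)ᵀ * (A - C * Mᵀ)) = trace (Aᵀ * A) - trace (Aᵀ * A * colProj M) := by
  rw [mul_transpose_eq_mul_colProj hM hC]
  exact trace_transpose_mul_self_sub_mul_of_isIdempotentElem A (isSymm_colProj M)
    (isIdempotentElem_colProj hM)

theorem IsSymm.diag_mem_Icc_of_isIdempotentElem {Q : Matrix n n ℝ} (hQ : Q.IsSymm)
    (hQQ : IsIdempotentElem Q) (j : n) : Q j j ∈ Set.Icc (0 : ℝ) 1 := by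
  have hdiag : Q j j = ∑ i, Q i j ^ 2 := by
    have hgram : Qᵀ * Q = Q := by rw [hQ.eq, hQQ.eq]
    conv_lhs => rw [← hgram]
    simp [mul_apply, sq]
  have hnonneg : 0 ≤ Q j j := hdiag ▸ sum_nonneg fun i _ => sq_nonneg _
  have hsq : Q j j ^ 2 ≤ Q j j := hdiag ▸ single_le_sum (fun i _ => sq_nonneg (Q i j)) (mem_univ j)
  exact ⟨hnonneg, by nlinarith⟩

def rectDiag (q s : ℕ) (σ : ℕ → ℝ) : Matrix (Fin q) (Fin s) ℝ :=
  of fun i j => if (i : ℕ) = j then σ i else 0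

variable {q s : ℕ}

-- The squared singular values of `U * rectDiag q s σ * Wᵀ`, padded with `0` from index `q` on
-- (the `σ n` with `n ≥ q` do not enter the matrix).
def sqSingularValue (q : ℕ) (σ : ℕ → ℝ) (n : ℕ) : ℝ := if n < q then σ n ^ 2 else 0

theorem antitone_sqSingularValue {σ : ℕ → ℝ} (hσ0 : ∀ n, 0 ≤ σ n) (hσ : Antitone σ) :
    Antitone (sqSingularValue q σ) := by
  intro a b hab
  unfold sqSingularValue
  split_ifs with hb ha ha
  · exact pow_le_pow_left₀ (hσ0 b) (hσ hab) 2
  · omega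
  · positivity
  · exact le_rfl

theorem rectDiag_transpose_mul_self (σ : ℕ → ℝ) :
    (rectDiag q s σ)ᵀ * rectDiag q s σ
      = diagonal fun j : Fin s => sqSingularValue q σ j := by
  ext j l
  simp only [mul_apply, transpose_apply, rectDiag, of_apply]
  rw [Fin.sum_univ_eq_sum_range
    (fun i => (if i = j then σ i else 0) * (if i = l then σ i else 0)) q]
  have hterm : ∀ i, (if i = (j : ℕ) then σ i else 0) * (if i = l then σ i else 0)
      = if i = (j : ℕ) then (if (j : ℕ) = l then σ j ^ 2 else 0) else 0 := by
    intro i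
    split_ifs <;> simp_all [sq]
  simp only [hterm, sum_ite_eq', mem_range, diagonal_apply, sqSingularValue, Fin.val_inj]
  split_ifs <;> simp_all

variable {U : Matrix (Fin q) (Fin q) ℝ} {W : Matrix (Fin s) (Fin s) ℝ} {σ : ℕ → ℝ}
  {A : Matrix (Fin q) (Fin s) ℝ}

theorem trace_transpose_mul_self_mul_eq_sum (hU : Uᵀ * U = 1)
    (hA : A = U * rectDiag q s σ * Wᵀ) (P : Matrix (Fin s) (Fin s) ℝ) :
    trace (Aᵀ * A * P) = ∑ j : Fin s, sqSingularValue q σ j * (Wᵀ * P * W) j j := by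
  have hgram : Aᵀ * A = W * diagonal (fun j : Fin s => sqSingularValue q σ j) * Wᵀ := by
    rw [hA, ← rectDiag_transpose_mul_self]
    simp only [transpose_mul, transpose_transpose, Matrix.mul_assoc]
    rw [← Matrix.mul_assoc Uᵀ U, hU, Matrix.one_mul]
  rw [hgram, Matrix.mul_assoc, Matrix.mul_assoc, trace_mul_comm, Matrix.mul_assoc]
  simp [trace, diagonal_mul]

-- Ky Fan's maximum principle, for the projector `P` onto a `k`-dimensional subspace.
theorem trace_transpose_mul_self_mul_le (hU : Uᵀ * U = 1) (hWW : W * Wᵀ = 1)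
    (hσ0 : ∀ n, 0 ≤ σ n) (hσ : Antitone σ) (hA : A = U * rectDiag q s σ * Wᵀ)
    {P : Matrix (Fin s) (Fin s) ℝ} (hP : P.IsSymm) (hPP : IsIdempotentElem P) {k : ℕ}
    (hPk : trace P = k) :
    trace (Aᵀ * A * P) ≤ ∑ i ∈ range k, sqSingularValue q σ i := by
  rw [trace_transpose_mul_self_mul_eq_sum hU hA]
  have hsymm : (Wᵀ * P * W).IsSymm := by
    simp only [IsSymm, transpose_mul, transpose_transpose, hP.eq, Matrix.mul_assoc]
  have hidem : IsIdempotentElem (Wᵀ * P * W) := by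
    simp only [IsIdempotentElem, Matrix.mul_assoc]
    rw [← Matrix.mul_assoc W Wᵀ, hWW, Matrix.one_mul, ← Matrix.mul_assoc P P, hPP.eq]
  have htrace : ∑ j, (Wᵀ * P * W) j j = k := by
    rw [← hPk]
    change trace (Wᵀ * P * W) = trace P
    rw [Matrix.mul_assoc, trace_mul_comm, Matrix.mul_assoc, hWW, Matrix.mul_one]
  exact sum_mul_le_sum_range_of_antitone (antitone_sqSingularValue hσ0 hσ)
    (hsymm.diag_mem_Icc_of_isIdempotentElem hidem) htrace

theorem trace_transpose_mul_self_mul_leading {k : ℕ} (hU : Uᵀ * U = 1) (hW : Wᵀ * W = 1)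
    (hA : A = U * rectDiag q s σ * Wᵀ) (hk : k ≤ s) :
    trace (Aᵀ * A * (W.submatrix id (Fin.castLE hk) * (W.submatrix id (Fin.castLE hk))ᵀ))
      = ∑ i ∈ range k, sqSingularValue q σ i := by
  set Wk := W.submatrix id (Fin.castLE hk)
  rw [trace_transpose_mul_self_mul_eq_sum hU hA]
  have hE : Wᵀ * Wk = (1 : Matrix (Fin s) (Fin s) ℝ).submatrix id (Fin.castLE hk) := by
    rw [← hW]; rfl
  have hdiag : ∀ j : Fin s, (Wᵀ * (Wk * Wkᵀ) * W) j j = if (j : ℕ) < k then 1 else 0 := by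
    intro j
    rw [← Matrix.mul_assoc, hE, Matrix.mul_assoc, ← transpose_transpose W, ← transpose_mul, hE]
    simp only [mul_apply, transpose_apply, submatrix_apply, id, one_apply, Fin.ext_iff,
      Fin.val_castLE, mul_ite, mul_one, mul_zero]
    simp +contextual only [if_true]
    rw [Fin.sum_univ_eq_sum_range (fun x => if (j : ℕ) = x then (1 : ℝ) else 0), sum_ite_eq]
    simp only [mem_range]
  simp only [hdiag, mul_ite, mul_one, mul_zero]
  exact sum_fin_ite_lt_eq_sum_range hk _

end Matrix

namespace MeasureTheory.L2

variable {α : Type*} [MeasurableSpace α] {μ : Measure α}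

theorem integral_mul_eq_inner_s8 (f g : Lp ℝ 2 μ) : ∫ a, f a * g a ∂μ = ⟪f, g⟫_ℝ := by
  rw [inner_def]
  exact integral_congr_ae (ae_of_all _ fun a => by simp [mul_comm])

theorem integrable_mul_s8 (f g : Lp ℝ 2 μ) : Integrable (fun a => f a * g a) μ := by
  simpa [mul_comm] using integrable_inner (𝕜 := ℝ) f g

end MeasureTheory.L2

section TensorProduct

variable {ι κ Ω T : Type*} [Fintype ι] [Fintype κ] [MeasurableSpace Ω] [MeasurableSpace T]
  {μ : Measure Ω} {τ : Measure T}

theorem integral_tensor_mul_tensor [SigmaFinite μ] [SigmaFinite τ] (ν : ι → Lp ℝ 2 μ)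
    (ψ : κ → Lp ℝ 2 τ) (E F : Matrix ι κ ℝ) :
    ∫ p : Ω × T, (∑ j, ∑ i, E i j * ν i p.1 * ψ j p.2) * (∑ j, ∑ i, F i j * ν i p.1 * ψ j p.2)
        ∂(μ.prod τ)
      = trace (Eᵀ * gram ℝ ν * F * (gram ℝ ψ)ᵀ) := by
  have hpt : ∀ p : Ω × T,
      (∑ j, ∑ i, E i j * ν i p.1 * ψ j p.2) * (∑ j, ∑ i, F i j * ν i p.1 * ψ j p.2)
        = ∑ j, ∑ l, ∑ i, ∑ k, E i j * F k l * ((ν i p.1 * ν k p.1) * (ψ j p.2 * ψ l p.2)) := by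
    intro p
    simp only [sum_mul_sum]
    refine sum_congr rfl fun j _ => sum_congr rfl fun l _ => sum_congr rfl fun i _ =>
      sum_congr rfl fun k _ => by ring
  have hint : ∀ i k j l, Integrable (fun p : Ω × T =>
      E i j * F k l * ((ν i p.1 * ν k p.1) * (ψ j p.2 * ψ l p.2))) (μ.prod τ) :=
    fun i k j l => ((L2.integrable_mul_s8 (ν i) (ν k)).mul_prod
      (L2.integrable_mul_s8 (ψ j) (ψ l))).const_mul _
  have hterm : ∀ i k j l, ∫ p : Ω × T,
      E i j * F k l * ((ν i p.1 * ν k p.1) * (ψ j p.2 * ψ l p.2)) ∂(μ.prod τ)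
        = E i j * F k l * (gram ℝ ν i k * gram ℝ ψ j l) := fun i k j l => by
    rw [integral_const_mul, integral_prod_mul (fun a => ν i a * ν k a) (fun b => ψ j b * ψ l b),
      L2.integral_mul_eq_inner_s8, L2.integral_mul_eq_inner_s8, gram_apply, gram_apply]
  simp only [hpt]
  rw [integral_finsetSum _ fun j _ => integrable_finsetSum _ fun l _ =>
    integrable_finsetSum _ fun i _ => integrable_finsetSum _ fun k _ => hint i k j l,
    trace_transpose_mul_mul_mul_transpose]
  refine sum_congr rfl fun j _ => ?_
  rw [integral_finsetSum _ fun l _ =>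
    integrable_finsetSum _ fun i _ => integrable_finsetSum _ fun k _ => hint i k j l]
  refine sum_congr rfl fun l _ => ?_
  rw [integral_finsetSum _ fun i _ => integrable_finsetSum _ fun k _ => hint i k j l]
  refine sum_congr rfl fun i _ => ?_
  rw [integral_finsetSum _ fun k _ => hint i k j l]
  exact sum_congr rfl fun k _ => hterm i k j l

theorem integral_tensor_mul_tensor_eq_trace [SigmaFinite μ] [SigmaFinite τ]
    {ν : ι → Lp ℝ 2 μ} {ψ : κ → Lp ℝ 2 τ} {LY : Matrix ι ι ℝ} {LS : Matrix κ κ ℝ}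
    (hMY : gram ℝ ν = LY * LYᵀ) (hMS : gram ℝ ψ = LS * LSᵀ) (E F : Matrix ι κ ℝ) :
    ∫ p : Ω × T, (∑ j, ∑ i, E i j * ν i p.1 * ψ j p.2) * (∑ j, ∑ i, F i j * ν i p.1 * ψ j p.2)
        ∂(μ.prod τ)
      = trace ((LYᵀ * E * LS)ᵀ * (LYᵀ * F * LS)) := by
  rw [integral_tensor_mul_tensor, hMY, hMS]
  simp only [transpose_mul, transpose_transpose, Matrix.mul_assoc]
  rw [trace_mul_comm LSᵀ]
  simp only [Matrix.mul_assoc]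

variable {r : Type*} [Fintype r] [DecidableEq r] [DecidableEq ι] [DecidableEq κ] [SigmaFinite μ]
  [SigmaFinite τ] {ν : ι → Lp ℝ 2 μ} {ψ : κ → Lp ℝ 2 τ} {LY : Matrix ι ι ℝ} {LS : Matrix κ κ ℝ}

theorem integral_residual_sq_eq (hLY : IsUnit LY.det) (hMY : gram ℝ ν = LY * LYᵀ)
    (hMS : gram ℝ ψ = LS * LSᵀ) (X : Matrix ι κ ℝ) {B : Matrix κ r ℝ}
    (hB : IsUnit ((LSᵀ * B)ᵀ * (LSᵀ * B)).det) {C : Matrix ι r ℝ}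
    (hC : ∀ D : Matrix ι r ℝ,
      ∫ p : Ω × T,
        ((∑ j, ∑ i, X i j * ν i p.1 * ψ j p.2)
          - ∑ k, ∑ i, C i k * ν i p.1 * (∑ j, B j k * ψ j p.2))
        * (∑ k, ∑ i, D i k * ν i p.1 * (∑ j, B j k * ψ j p.2))
        ∂(μ.prod τ) = 0) :
    ∫ p : Ω × T,
        ((∑ j, ∑ i, X i j * ν i p.1 * ψ j p.2)
          - ∑ k, ∑ i, C i k * ν i p.1 * (∑ j, B j k * ψ j p.2)) ^ 2 ∂(μ.prod τ)
      = trace ((LYᵀ * X * LS)ᵀ * (LYᵀ * X * LS))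
        - trace ((LYᵀ * X * LS)ᵀ * (LYᵀ * X * LS) * colProj (LSᵀ * B)) := by
  have hcoeff : ∀ D : Matrix ι r ℝ, LYᵀ * (D * Bᵀ) * LS = LYᵀ * D * (LSᵀ * B)ᵀ := fun D => by
    simp only [transpose_mul, transpose_transpose, Matrix.mul_assoc]
  have hres : LYᵀ * (X - C * Bᵀ) * LS = LYᵀ * X * LS - LYᵀ * C * (LSᵀ * B)ᵀ := by
    rw [Matrix.mul_sub, Matrix.sub_mul, hcoeff]
  simp only [sum_sum_mul_sum_eq_mul_transpose, sum_sum_sub_sum_sum_eq_sub, pow_two,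
    integral_tensor_mul_tensor_eq_trace hMY hMS, hres, hcoeff] at hC ⊢
  refine trace_residual_of_orthogonal hB fun D => ?_
  have hLYt : IsUnit LYᵀ.det := by rwa [det_transpose]
  simpa only [← Matrix.mul_assoc, mul_nonsing_inv _ hLYt, Matrix.one_mul] using hC ((LYᵀ)⁻¹ * D)

end TensorProduct

theorem stmt_8_general
    {q s shat : ℕ} {Ω T : Type*} [MeasurableSpace Ω] [MeasurableSpace T]
    (μ : Measure Ω) (τ : Measure T) [SigmaFinite μ] [SigmaFinite τ]
    (ν : Fin q → Lp ℝ 2 μ) (ψ : Fin s → Lp ℝ 2 τ)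
    (LS : Matrix (Fin s) (Fin s) ℝ) (hLS : IsUnit LS.det)
    (hMS : ∀ i j, (inner ℝ (ψ i) (ψ j) : ℝ) = (LS * LSᵀ) i j)
    (LY : Matrix (Fin q) (Fin q) ℝ) (hLY : IsUnit LY.det)
    (hMY : ∀ i j, (inner ℝ (ν i) (ν j) : ℝ) = (LY * LYᵀ) i j)
    (X : Matrix (Fin q) (Fin s) ℝ)
    -- an SVD of A = L_Yᵀ X L_S with decreasingly ordered singular values:
    (U : Matrix (Fin q) (Fin q) ℝ) (W : Matrix (Fin s) (Fin s) ℝ) (σ : ℕ → ℝ)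
    (hU : Uᵀ * U = 1) (hW : Wᵀ * W = 1) (hWW : W * Wᵀ = 1)
    (hσ0 : ∀ n, 0 ≤ σ n) (hσmono : ∀ m n, m ≤ n → σ n ≤ σ m)
    (hSVD : LYᵀ * X * LS
        = U * (Matrix.of fun (i : Fin q) (j : Fin s) =>
            if (i : ℕ) = (j : ℕ) then σ i else 0) * Wᵀ)
    (hshat : shat ≤ s)
    -- U_{ŝ}: the ŝ leading right singular vectors:
    (Us : Matrix (Fin s) (Fin shat) ℝ)
    (hUs : ∀ j k, Us j k = W j (Fin.castLE hshat k))
    -- Π_{Ŝ·Y} x, with coefficients Ĉ w.r.t. the basis {ν_i ψ̂_k} of Ŝ·Y,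
    -- characterized by residual orthogonality to Ŝ·Y:
    (Chat : Matrix (Fin q) (Fin shat) ℝ)
    (hChat : ∀ D : Matrix (Fin q) (Fin shat) ℝ,
      ∫ p : Ω × T,
        ((∑ j, ∑ i, X i j * ν i p.1 * ψ j p.2)
          - ∑ k, ∑ i, Chat i k * ν i p.1 * (∑ j, ((LSᵀ)⁻¹ * Us) j k * ψ j p.2))
        * (∑ k, ∑ i, D i k * ν i p.1 * (∑ j, ((LSᵀ)⁻¹ * Us) j k * ψ j p.2))
        ∂(μ.prod τ) = 0)
    -- an arbitrary ŝ-dimensional subspace R ⊆ S, spanned by the columns of B: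
    (B : Matrix (Fin s) (Fin shat) ℝ)
    (hB : LinearIndependent ℝ (fun k : Fin shat => fun j : Fin s => B j k))
    -- Π_{R·Y} x, with coefficients C, characterized by residual orthogonality:
    (C : Matrix (Fin q) (Fin shat) ℝ)
    (hC : ∀ D : Matrix (Fin q) (Fin shat) ℝ,
      ∫ p : Ω × T,
        ((∑ j, ∑ i, X i j * ν i p.1 * ψ j p.2)
          - ∑ k, ∑ i, C i k * ν i p.1 * (∑ j, B j k * ψ j p.2))
        * (∑ k, ∑ i, D i k * ν i p.1 * (∑ j, B j k * ψ j p.2))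
        ∂(μ.prod τ) = 0) :
    ∫ p : Ω × T,
        ((∑ j, ∑ i, X i j * ν i p.1 * ψ j p.2)
          - ∑ k, ∑ i, Chat i k * ν i p.1 * (∑ j, ((LSᵀ)⁻¹ * Us) j k * ψ j p.2)) ^ 2
        ∂(μ.prod τ)
      ≤ ∫ p : Ω × T,
        ((∑ j, ∑ i, X i j * ν i p.1 * ψ j p.2)
          - ∑ k, ∑ i, C i k * ν i p.1 * (∑ j, B j k * ψ j p.2)) ^ 2
        ∂(μ.prod τ) := by
  have hgramY : gram ℝ ν = LY * LYᵀ := Matrix.ext hMY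
  have hgramS : gram ℝ ψ = LS * LSᵀ := Matrix.ext hMS
  have hLSt : IsUnit LSᵀ.det := by rwa [det_transpose]
  have hLSt' : IsUnit LSᵀ := (isUnit_iff_isUnit_det _).mpr hLSt
  have hUs' : Us = W.submatrix id (Fin.castLE hshat) := Matrix.ext hUs
  have hUsUs : Usᵀ * Us = 1 :=
    hUs' ▸ submatrix_id_transpose_mul_self hW (Fin.castLE_injective hshat)
  have hLSUs : LSᵀ * ((LSᵀ)⁻¹ * Us) = Us := mul_nonsing_inv_cancel_left _ _ hLSt
  have hRgram : IsUnit ((LSᵀ * B)ᵀ * (LSᵀ * B)).det := by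
    refine isUnit_det_transpose_mul_self_of_injective ?_
    rw [show (LSᵀ * B).mulVec = LSᵀ.mulVec ∘ B.mulVec from
      funext fun v => (mulVec_mulVec v _ _).symm]
    exact (mulVec_injective_iff_isUnit.mpr hLSt').comp (mulVec_injective_iff.mpr hB)
  rw [integral_residual_sq_eq hLY hgramY hgramS X (by rw [hLSUs, hUsUs]; simp) hChat,
    integral_residual_sq_eq hLY hgramY hgramS X hRgram hC, hLSUs,
    colProj_of_transpose_mul_self_eq_one hUsUs, hUs',
    trace_transpose_mul_self_mul_leading hU hW hSVD hshat]
  gcongr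
  exact trace_transpose_mul_self_mul_le hU hWW hσ0 hσmono hSVD (isSymm_colProj _)
    (isIdempotentElem_colProj hRgram) (by rw [trace_colProj hRgram, Fintype.card_fin])

/-- Optimal low-rank bases in time. Let `x ∈ S·Y` have coefficient matrix `X`,
let `M_Y = L_Y L_Yᵀ`, `M_S = L_S L_Sᵀ` with `L_Y, L_S` invertible, and let
`U_{ŝ}` consist of `ŝ` leading right singular vectors of `A := L_Yᵀ X L_S`
(encoded by a full SVD `A = U Σ Wᵀ` with decreasingly ordered nonnegative
singular values `σ`, `U_{ŝ}` being the first `ŝ` columns of `W`). With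
`ψ̂_k := ∑_j (L_S^{-ᵀ} U_{ŝ})_{jk} ψ_j` and `Ŝ = span{ψ̂_k}`, the space `Ŝ` is a
best-approximating `ŝ`-dimensional subspace of `S`: for every `ŝ`-dimensional
subspace `R ⊆ S` (spanned by `r_k = ∑_j B_{jk} ψ_j` with linearly independent
columns `B`), the `L²((0,T)×Ω)` error of the orthogonal projection of `x` onto
`Ŝ·Y` (characterized by orthogonality of the residual to `Ŝ·Y`) is at most the
error of the orthogonal projection of `x` onto `R·Y`. -/
theorem stmt_8
    {q s shat : ℕ} {Ω T : Type*} [MeasurableSpace Ω] [MeasurableSpace T]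
    (μ : Measure Ω) (τ : Measure T) [SigmaFinite μ] [SigmaFinite τ]
    (ν : Fin q → Lp ℝ 2 μ) (ψ : Fin s → Lp ℝ 2 τ)
    (hν : LinearIndependent ℝ ν) (hψ : LinearIndependent ℝ ψ)
    (LS : Matrix (Fin s) (Fin s) ℝ) (hLS : IsUnit LS.det)
    (hMS : ∀ i j, (inner ℝ (ψ i) (ψ j) : ℝ) = (LS * LSᵀ) i j)
    (LY : Matrix (Fin q) (Fin q) ℝ) (hLY : IsUnit LY.det)
    (hMY : ∀ i j, (inner ℝ (ν i) (ν j) : ℝ) = (LY * LYᵀ) i j)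
    (X : Matrix (Fin q) (Fin s) ℝ)
    -- an SVD of A = L_Yᵀ X L_S with decreasingly ordered singular values:
    (U : Matrix (Fin q) (Fin q) ℝ) (W : Matrix (Fin s) (Fin s) ℝ) (σ : ℕ → ℝ)
    (hU : Uᵀ * U = 1) (hUU : U * Uᵀ = 1) (hW : Wᵀ * W = 1) (hWW : W * Wᵀ = 1)
    (hσ0 : ∀ n, 0 ≤ σ n) (hσmono : ∀ m n, m ≤ n → σ n ≤ σ m)
    (hSVD : LYᵀ * X * LS
        = U * (Matrix.of fun (i : Fin q) (j : Fin s) =>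
            if (i : ℕ) = (j : ℕ) then σ i else 0) * Wᵀ)
    (hshat : shat ≤ s)
    -- U_{ŝ}: the ŝ leading right singular vectors:
    (Us : Matrix (Fin s) (Fin shat) ℝ)
    (hUs : ∀ j k, Us j k = W j (Fin.castLE hshat k))
    -- Π_{Ŝ·Y} x, with coefficients Ĉ w.r.t. the basis {ν_i ψ̂_k} of Ŝ·Y,
    -- characterized by residual orthogonality to Ŝ·Y:
    (Chat : Matrix (Fin q) (Fin shat) ℝ)
    (hChat : ∀ D : Matrix (Fin q) (Fin shat) ℝ,
      ∫ p : Ω × T,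
        ((∑ j, ∑ i, X i j * ν i p.1 * ψ j p.2)
          - ∑ k, ∑ i, Chat i k * ν i p.1 * (∑ j, ((LSᵀ)⁻¹ * Us) j k * ψ j p.2))
        * (∑ k, ∑ i, D i k * ν i p.1 * (∑ j, ((LSᵀ)⁻¹ * Us) j k * ψ j p.2))
        ∂(μ.prod τ) = 0)
    -- an arbitrary ŝ-dimensional subspace R ⊆ S, spanned by the columns of B:
    (B : Matrix (Fin s) (Fin shat) ℝ)
    (hB : LinearIndependent ℝ (fun k : Fin shat => fun j : Fin s => B j k))
    -- Π_{R·Y} x, with coefficients C, characterized by residual orthogonality: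
    (C : Matrix (Fin q) (Fin shat) ℝ)
    (hC : ∀ D : Matrix (Fin q) (Fin shat) ℝ,
      ∫ p : Ω × T,
        ((∑ j, ∑ i, X i j * ν i p.1 * ψ j p.2)
          - ∑ k, ∑ i, C i k * ν i p.1 * (∑ j, B j k * ψ j p.2))
        * (∑ k, ∑ i, D i k * ν i p.1 * (∑ j, B j k * ψ j p.2))
        ∂(μ.prod τ) = 0) :
    ∫ p : Ω × T,
        ((∑ j, ∑ i, X i j * ν i p.1 * ψ j p.2)
          - ∑ k, ∑ i, Chat i k * ν i p.1 * (∑ j, ((LSᵀ)⁻¹ * Us) j k * ψ j p.2)) ^ 2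
        ∂(μ.prod τ)
      ≤ ∫ p : Ω × T,
        ((∑ j, ∑ i, X i j * ν i p.1 * ψ j p.2)
          - ∑ k, ∑ i, C i k * ν i p.1 * (∑ j, B j k * ψ j p.2)) ^ 2
        ∂(μ.prod τ) :=
  stmt_8_general μ τ ν ψ LS hLS hMS LY hLY hMY X U W σ hU hW hWW hσ0 hσmono hSVD hshat Us hUs Chat
    hChat B hB C hC
end
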